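/- arXiv:2603.08502 — 4 statements merged into one kernel-verified Lean document; each statement's English description precedes it below -/
import Mathlib

section
/- Let a_n = (−1)^{⌊n/2⌋}·c_n, where c_n = P_{C_n}(−1) is the value of the independence polynomial of the cycle C_n at −1. Then a_n = 1 if and only if n ≡ 1, 2, 5, or 10 (mod 12). -/
/-- With `c n = P_{C_n}(-1)` (given by its values mod 6) and
`a n = (-1)^⌊n/2⌋ * c n`, one has `a n = 1` iff `n ≡ 1, 2, 5, 10 (mod 12)`. -/
theorem stmt5 (c : ℕ → ℤ)
    (hc : ∀ n, 3 ≤ n →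
      (n % 6 = 0 → c n = 2) ∧
      (n % 6 = 1 ∨ n % 6 = 5 → c n = 1) ∧
      (n % 6 = 2 ∨ n % 6 = 4 → c n = -1) ∧
      (n % 6 = 3 → c n = -2)) :
    ∀ n, 3 ≤ n →
      ((-1 : ℤ) ^ (n / 2) * c n = 1 ↔
        n % 12 = 1 ∨ n % 12 = 2 ∨ n % 12 = 5 ∨ n % 12 = 10) := by
  intro n hn
  obtain ⟨h0, h1, h2, h3⟩ := hc n hn
  have hpow : (-1:ℤ)^(n/2) = (-1)^(n/2 % 2) := by
    conv_lhs => rw [← Nat.div_add_mod (n/2) 2]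
    rw [pow_add, pow_mul]
    norm_num
  rw [hpow]
  have h12 : n % 12 < 12 := Nat.mod_lt _ (by norm_num)
  interval_cases h : n % 12 <;>
    [ (rw [h0 (by omega)]);
      (rw [h1 (by omega)]);
      (rw [h2 (by omega)]);
      (rw [h3 (by omega)]);
      (rw [h2 (by omega)]);
      (rw [h1 (by omega)]);
      (rw [h0 (by omega)]);
      (rw [h1 (by omega)]);
      (rw [h2 (by omega)]);
      (rw [h3 (by omega)]);
      (rw [h2 (by omega)]);
      (rw [h1 (by omega)])] <;>
    (have : n / 2 % 2 = n % 12 / 2 % 2 := by omega) <;>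
    rw [this, h] <;> norm_num
end

section
/- For n ≥ 1, the equality p_n − 1 = (−1)^{⌈n/2⌉} holds if and only if n ≡ 1 or 10 (mod 12), where p_n = P_{P_n}(−1). Equivalently, the full suspension (cone) over the path P_n is pseudo-Gorenstein* if and only if n ≡ 1 or 10 (mod 12). -/
/-- With `p n = P_{P_n}(-1)` given by its values mod 6, for `n ≥ 1` one has
`p n - 1 = (-1)^⌈n/2⌉` iff `n ≡ 1, 10 (mod 12)`; i.e. the full suspension of the
path `P_n` is pseudo-Gorenstein* iff `n ≡ 1, 10 (mod 12)`. -/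
theorem stmt10 (p : ℕ → ℤ)
    (hp : ∀ n,
      (n % 6 = 0 ∨ n % 6 = 5 → p n = 1) ∧
      (n % 6 = 1 ∨ n % 6 = 4 → p n = 0) ∧
      (n % 6 = 2 ∨ n % 6 = 3 → p n = -1)) :
    ∀ n, 1 ≤ n →
      (p n - 1 = (-1 : ℤ) ^ ((n + 1) / 2) ↔ n % 12 = 1 ∨ n % 12 = 10) := by
  intro n hn
  obtain ⟨h0, h1, h2⟩ := hp n
  have hpow : (-1 : ℤ) ^ ((n + 1) / 2) = (-1 : ℤ) ^ (((n + 1) / 2) % 2) :=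
    neg_one_pow_eq_pow_mod_two _
  have hm : ((n + 1) / 2) % 2 = ((n % 12 + 1) / 2) % 2 := by omega
  have h6 : n % 6 = n % 12 % 6 := by omega
  rw [hpow, hm]
  have h12 : n % 12 < 12 := Nat.mod_lt n (by norm_num)
  interval_cases h : n % 12 <;> simp_all
end

section
/- Let G be a finite simple graph with independence number α ≥ 2, let C be a vertex cover of G, and set S = V(G)∖C with 1 ≤ |S| ≤ α − 1. Let H = G(C) be the C-suspension of G. Then α(H) = α(G) and P_H(x) = P_G(x) + x(1+x)^{|S|}; in particular P_H(−1) = P_G(−1). -/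
open scoped Classical

/-- A finset of vertices is independent: no two of its members are adjacent. -/
def IsIndepFinset {V : Type*} (G : SimpleGraph V) (s : Finset V) : Prop :=
  ∀ a ∈ s, ∀ b ∈ s, ¬ G.Adj a b

/-- The independence polynomial of `G`, evaluated at `x : ℤ`:
`P_G(x) = Σ_i g_i x^i` where `g_i` is the number of independent sets of size `i`. -/
noncomputable def indepPolynomial {V : Type*} [Fintype V] (G : SimpleGraph V) (x : ℤ) : ℤ :=
  ∑ s ∈ Finset.univ.filter (fun s : Finset V => IsIndepFinset G s), x ^ s.card

/-- The independence number of `G`. -/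
noncomputable def indepNumber {V : Type*} [Fintype V] (G : SimpleGraph V) : ℕ :=
  (Finset.univ.filter (fun s : Finset V => IsIndepFinset G s)).sup Finset.card

/-- The `C`-suspension of `G`: adjoin a new vertex (`none`) adjacent exactly to `C`. -/
def susp {V : Type*} (G : SimpleGraph V) (C : Set V) : SimpleGraph (Option V) where
  Adj a b :=
    match a, b with
    | some a, some b => G.Adj a b
    | some a, none => a ∈ C
    | none, some b => b ∈ C
    | none, none => False
  symm := by
    constructor
    rintro (_ | a) (_ | b) h
    · exact h
    · exact h
    · exact h
    · exact h.symm
  loopless := by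
    constructor
    rintro (_ | a) h
    · exact h
    · exact G.irrefl h

/-!
An independent set of `G(C)` either avoids the new vertex `z`, and is then an independent set
of `G`, or is `z` together with a subset of `S = V ∖ C`; since `C` is a vertex cover, every subset
of `S` is independent. Hence `P_{G(C)}(x) = P_G(x) + x (1 + x)^|S|` and
`α(G(C)) = max (α(G), |S| + 1)`, which is `α(G)` when `|S| ≤ α(G) - 1`.
-/

namespace Finset

variable {α : Type*}

theorem eq_map_some_or_eq_insertNone (s : Finset (Option α)) :
    s = s.eraseNone.map Function.Embedding.some ∨ s = insertNone s.eraseNone := by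
  by_cases h : none ∈ s
  · right
    rw [insertNone_eraseNone, insert_eq_of_mem h]
  · left
    rw [map_some_eraseNone, erase_eq_of_notMem h]

theorem sum_finset_option [Fintype α] {M : Type*} [AddCommMonoid M]
    (f : Finset (Option α) → M) :
    ∑ s, f s = ∑ t : Finset α, f (t.map Function.Embedding.some) +
      ∑ t : Finset α, f (insertNone t) := by
  rw [← sum_filter_not_add_sum_filter univ (fun s => none ∈ s)]
  congr 1
  · refine sum_nbij' eraseNone (map Function.Embedding.some) ?_ ?_ ?_ ?_ ?_ <;>
      simp +contextual [erase_eq_of_notMem]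
  · refine sum_nbij' eraseNone insertNone ?_ ?_ ?_ ?_ ?_ <;>
      simp +contextual [insert_eq_of_mem]

end Finset

open Finset

section Independence

variable {V : Type*} {G : SimpleGraph V}

theorem IsIndepFinset.of_forall_notMem_cover {C : Set V}
    (hcover : ∀ a b, G.Adj a b → a ∈ C ∨ b ∈ C) {t : Finset V}
    (ht : ∀ a ∈ t, a ∉ C) : IsIndepFinset G t := fun a ha b hb hab =>
  (hcover a b hab).elim (ht a ha) (ht b hb)

variable [Fintype V]

theorem le_indepNumber {s : Finset V} (hs : IsIndepFinset G s) : #s ≤ indepNumber G :=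
  le_sup (mem_filter.2 ⟨mem_univ s, hs⟩)

theorem indepNumber_le {n : ℕ} (h : ∀ s, IsIndepFinset G s → #s ≤ n) :
    indepNumber G ≤ n :=
  Finset.sup_le fun s hs => h s (mem_filter.1 hs).2

theorem indepPolynomial_eq_sum_ite (x : ℤ) :
    indepPolynomial G x = ∑ s, if IsIndepFinset G s then x ^ #s else 0 :=
  sum_filter _ _

end Independence

section Suspension

variable {V : Type*} (G : SimpleGraph V)

theorem isIndepFinset_susp_map (C : Set V) (t : Finset V) :
    IsIndepFinset (susp G C) (t.map Function.Embedding.some) ↔ IsIndepFinset G t := by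
  simp [IsIndepFinset, susp]

theorem isIndepFinset_susp_insertNone (C : Set V) (t : Finset V) :
    IsIndepFinset (susp G C) (insertNone t) ↔ IsIndepFinset G t ∧ ∀ a ∈ t, a ∉ C := by
  simp only [IsIndepFinset, forall_mem_insertNone, susp, not_false_eq_true, true_and]
  exact ⟨fun ⟨hC, hG⟩ => ⟨fun a ha => (hG a ha).2, hC⟩,
    fun ⟨hG, hC⟩ => ⟨hC, fun a ha => ⟨hC a ha, hG a ha⟩⟩⟩

variable [Fintype V] [DecidableEq V] {G} {C : Finset V}

theorem isIndepFinset_susp_insertNone_iff_subset_compl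
    (hcover : ∀ a b, G.Adj a b → a ∈ C ∨ b ∈ C) (t : Finset V) :
    IsIndepFinset (susp G ↑C) (insertNone t) ↔ t ⊆ Cᶜ := by
  rw [isIndepFinset_susp_insertNone]
  refine ⟨fun h a ha => mem_compl.2 (h.2 a ha), fun h => ?_⟩
  have hS : ∀ a ∈ t, a ∉ (C : Set V) := fun a ha => mem_compl.1 (h ha)
  exact ⟨.of_forall_notMem_cover hcover hS, hS⟩

theorem indepNumber_susp (hcover : ∀ a b, G.Adj a b → a ∈ C ∨ b ∈ C) :
    indepNumber (susp G ↑C) = max (indepNumber G) (#Cᶜ + 1) := by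
  refine le_antisymm (indepNumber_le fun s hs => ?_) (max_le ?_ ?_)
  · rcases s.eq_map_some_or_eq_insertNone with h | h <;> rw [h] at hs ⊢
    · rw [card_map]
      exact le_max_of_le_left (le_indepNumber ((isIndepFinset_susp_map G _ _).1 hs))
    · rw [card_insertNone]
      exact le_max_of_le_right (by
        simpa using card_le_card ((isIndepFinset_susp_insertNone_iff_subset_compl hcover _).1 hs))
  · exact indepNumber_le fun t ht => by
      simpa using le_indepNumber ((isIndepFinset_susp_map G _ _).2 ht)
  · exact card_insertNone Cᶜ ▸
      le_indepNumber ((isIndepFinset_susp_insertNone_iff_subset_compl hcover _).2 subset_rfl)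

theorem indepPolynomial_susp (hcover : ∀ a b, G.Adj a b → a ∈ C ∨ b ∈ C) (x : ℤ) :
    indepPolynomial (susp G ↑C) x = indepPolynomial G x + x * (1 + x) ^ #Cᶜ := by
  rw [indepPolynomial_eq_sum_ite, sum_finset_option, indepPolynomial_eq_sum_ite]
  simp only [isIndepFinset_susp_map, isIndepFinset_susp_insertNone_iff_subset_compl hcover,
    card_map, card_insertNone]
  congr 1
  rw [← sum_filter, filter_subset_univ]
  simp_rw [pow_succ', ← mul_sum]
  simpa [add_comm] using congrArg (x * ·) (sum_pow_mul_eq_add_pow x 1 Cᶜ)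

end Suspension

theorem stmt13_general {V : Type*} [Fintype V] [DecidableEq V] (G : SimpleGraph V)
    (C : Finset V) (hcover : ∀ a b, G.Adj a b → a ∈ C ∨ b ∈ C)
    (hS1 : 1 ≤ (Cᶜ : Finset V).card)
    (hS2 : (Cᶜ : Finset V).card ≤ indepNumber G - 1) :
    indepNumber (susp G (↑C : Set V)) = indepNumber G ∧
      (∀ x : ℤ, indepPolynomial (susp G (↑C : Set V)) x =
        indepPolynomial G x + x * (1 + x) ^ (Cᶜ : Finset V).card) ∧
      indepPolynomial (susp G (↑C : Set V)) (-1) = indepPolynomial G (-1) := by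
  refine ⟨by rw [indepNumber_susp hcover]; omega, indepPolynomial_susp hcover, ?_⟩
  rw [indepPolynomial_susp hcover, add_neg_cancel, zero_pow (by omega), mul_zero, add_zero]

/-- Suspension over a vertex cover `C` with `1 ≤ |S| ≤ α - 1`, `S = V∖C`:
`α(H) = α(G)`, `P_H(x) = P_G(x) + x(1+x)^{|S|}`, in particular `P_H(-1) = P_G(-1)`. -/
theorem stmt13 {V : Type*} [Fintype V] [DecidableEq V] (G : SimpleGraph V)
    (C : Finset V) (hcover : ∀ a b, G.Adj a b → a ∈ C ∨ b ∈ C)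
    (hα : 2 ≤ indepNumber G)
    (hS1 : 1 ≤ (Cᶜ : Finset V).card)
    (hS2 : (Cᶜ : Finset V).card ≤ indepNumber G - 1) :
    indepNumber (susp G (↑C : Set V)) = indepNumber G ∧
      (∀ x : ℤ, indepPolynomial (susp G (↑C : Set V)) x =
        indepPolynomial G x + x * (1 + x) ^ (Cᶜ : Finset V).card) ∧
      indepPolynomial (susp G (↑C : Set V)) (-1) = indepPolynomial G (-1) :=
  stmt13_general G C hcover hS1 hS2
end

section
/- Let n ≥ 4, let 𝒞 be a maximal independent set of C_n with c = |𝒞| and ℓ = n − 2c, and let G be the 𝒞-suspension of C_n. Then P_G(x) = P_{C_n}(x) + x(1+x)^{c−ℓ}(1+2x)^{ℓ}. -/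
open scoped Classical

/-!
Deleting the apex of the suspension gives `P_G = P_{C_n} + x · P_K`, where `K = 𝒞ᶜ` is the set of
vertices not adjacent to the apex. By maximality every vertex of `K` has a neighbour in `𝒞`, hence
at most one neighbour in `K`: the graph induced on `K` is a matching plus `i` isolated vertices, so
`P_K = (1 + x)^i (1 + 2x)^((|K| - i)/2)`. Finally `K = (𝒞 + 1) ∪ (𝒞 - 1)` and the isolated vertices
are exactly `(𝒞 + 1) ∩ (𝒞 - 1)`, so inclusion–exclusion gives `|K| + i = 2c`, whence `i = c - ℓ`
and `(|K| - i)/2 = ℓ`.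
-/

open Finset

section IndependencePolynomial

variable {V : Type*} (G : SimpleGraph V)

noncomputable def indepPolynomialOn (K : Finset V) (x : ℤ) : ℤ :=
  ∑ s ∈ K.powerset.filter (IsIndepFinset G), x ^ #s

noncomputable def isolatedOn (K : Finset V) : Finset V :=
  K.filter fun v => ∀ u ∈ K, ¬ G.Adj v u

variable {G}

lemma IsIndepFinset.mono {s t : Finset V} (hs : IsIndepFinset G s) (hts : t ⊆ s) :
    IsIndepFinset G t :=
  fun a ha b hb => hs a (hts ha) b (hts hb)

lemma isIndepFinset_insert [DecidableEq V] {v : V} {s : Finset V} :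
    IsIndepFinset G (insert v s) ↔ IsIndepFinset G s ∧ ∀ u ∈ s, ¬ G.Adj v u := by
  simp only [IsIndepFinset, forall_mem_insert, G.irrefl, not_false_eq_true, true_and]
  exact ⟨fun h => ⟨fun a ha b hb => h.2 a ha |>.2 b hb, h.1⟩,
    fun h => ⟨h.2, fun a ha => ⟨fun hav => h.2 a ha hav.symm, h.1 a ha⟩⟩⟩

lemma indepPolynomial_eq_indepPolynomialOn_univ [Fintype V] (x : ℤ) :
    indepPolynomial G x = indepPolynomialOn G univ x := by
  rw [indepPolynomial, indepPolynomialOn, powerset_univ]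

lemma indepPolynomialOn_of_isIndepFinset {K : Finset V} (hK : IsIndepFinset G K) (x : ℤ) :
    indepPolynomialOn G K x = (1 + x) ^ #K := by
  rw [indepPolynomialOn, filter_true_of_mem fun s hs => hK.mono (mem_powerset.mp hs),
    add_comm, ← sum_pow_mul_eq_add_pow]
  simp

lemma indepPolynomialOn_insert [DecidableEq V] {v : V} {K : Finset V} (hv : v ∉ K) (x : ℤ) :
    indepPolynomialOn G (insert v K) x =
      indepPolynomialOn G K x + x * indepPolynomialOn G (K.filter (¬ G.Adj v ·)) x := by
  rw [indepPolynomialOn, sum_filter, sum_powerset_insert hv, ← sum_filter, ← sum_filter]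
  congr 1
  have hsets : (K.powerset.filter fun s => IsIndepFinset G (insert v s)) =
      (K.filter (¬ G.Adj v ·)).powerset.filter (IsIndepFinset G) := by
    ext s
    simp only [mem_filter, mem_powerset, isIndepFinset_insert, subset_iff]
    grind
  rw [hsets, indepPolynomialOn, mul_sum]
  refine sum_congr rfl fun s hs => ?_
  have hvs : v ∉ s := fun h => hv (filter_subset _ _ (mem_powerset.mp (mem_filter.mp hs).1 h))
  rw [card_insert_of_notMem hvs, pow_succ']

lemma indepPolynomialOn_insert_of_forall_not_adj [DecidableEq V] {v : V} {K : Finset V}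
    (hv : v ∉ K) (hvK : ∀ u ∈ K, ¬ G.Adj v u) (x : ℤ) :
    indepPolynomialOn G (insert v K) x = (1 + x) * indepPolynomialOn G K x := by
  rw [indepPolynomialOn_insert hv, filter_true_of_mem hvK]
  ring

lemma indepPolynomialOn_insert_insert_of_adj [DecidableEq V] {v w : V} {K : Finset V}
    (hv : v ∉ K) (hw : w ∉ K) (hvw : G.Adj v w) (hvK : ∀ u ∈ K, ¬ G.Adj v u)
    (hwK : ∀ u ∈ K, ¬ G.Adj w u) (x : ℤ) :
    indepPolynomialOn G (insert v (insert w K)) x = (1 + 2 * x) * indepPolynomialOn G K x := by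
  have hv' : v ∉ insert w K := by simp [hv, hvw.ne]
  have hfilter : (insert w K).filter (¬ G.Adj v ·) = K := by
    rw [filter_insert, if_neg (not_not.mpr hvw), filter_true_of_mem hvK]
  rw [indepPolynomialOn_insert hv', hfilter, indepPolynomialOn_insert_of_forall_not_adj hw hwK]
  ring

lemma isolatedOn_insert_insert_of_adj [DecidableEq V] {v w : V} {K : Finset V}
    (hvw : G.Adj v w) (hvK : ∀ u ∈ K, ¬ G.Adj v u) (hwK : ∀ u ∈ K, ¬ G.Adj w u) :
    isolatedOn G (insert v (insert w K)) = isolatedOn G K := by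
  ext u
  simp only [isolatedOn, mem_filter, mem_insert, forall_eq_or_imp]
  constructor
  · rintro ⟨rfl | rfl | hu, hnv, hnw, h⟩
    · exact absurd hvw hnw
    · exact absurd hvw.symm hnv
    · exact ⟨hu, h⟩
  · rintro ⟨hu, h⟩
    exact ⟨Or.inr (Or.inr hu), fun h' => hvK u hu h'.symm, fun h' => hwK u hu h'.symm, h⟩

lemma indepPolynomialOn_map {W : Type*} (H : SimpleGraph W) (f : V ↪ W) (K : Finset V) (x : ℤ) :
    indepPolynomialOn H (K.map f) x = indepPolynomialOn (H.comap f) K x := by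
  have hpow : (K.map f).powerset = K.powerset.map (mapEmbedding f).toEmbedding := by
    ext t
    simp only [mem_powerset, subset_map_iff, mem_map, RelEmbedding.coe_toEmbedding,
      mapEmbedding_apply, eq_comm]
  have hindep : ∀ s : Finset V, IsIndepFinset H (s.map f) ↔ IsIndepFinset (H.comap f) s := by
    intro s
    simp [IsIndepFinset]
  simp only [indepPolynomialOn, hpow, filter_map, sum_map]
  refine sum_congr ?_ fun s _ => by simp
  ext s
  simp [hindep]

lemma indepPolynomialOn_of_subsingleton_neighbors [DecidableEq V] (K : Finset V)
    (hK : ∀ v ∈ K, ∀ u ∈ K, ∀ w ∈ K, G.Adj v u → G.Adj v w → u = w) (x : ℤ) :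
    indepPolynomialOn G K x =
      (1 + x) ^ #(isolatedOn G K) * (1 + 2 * x) ^ ((#K - #(isolatedOn G K)) / 2) := by
  induction K using Finset.strongInduction with
  | H K ih =>
  by_cases hedge : ∃ v ∈ K, ∃ w ∈ K, G.Adj v w
  · obtain ⟨v, hv, w, hw, hvw⟩ := hedge
    set K' := (K.erase v).erase w
    have hvK' : v ∉ K' := by simp [K']
    have hwK' : w ∉ K' := by simp [K']
    have hK'K : K' ⊆ K := (erase_subset _ _).trans (erase_subset _ _)
    have hvK : ∀ u ∈ K', ¬ G.Adj v u := fun u hu hvu =>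
      hwK' (hK v hv u (hK'K hu) w hw hvu hvw ▸ hu)
    have hwK : ∀ u ∈ K', ¬ G.Adj w u := fun u hu hwu =>
      hvK' (hK w hw u (hK'K hu) v hv hwu hvw.symm ▸ hu)
    have hK_eq : K = insert v (insert w K') := by
      rw [insert_erase (mem_erase.mpr ⟨hvw.ne.symm, hw⟩), insert_erase hv]
    have hiso : isolatedOn G K = isolatedOn G K' := by
      rw [hK_eq, isolatedOn_insert_insert_of_adj hvw hvK hwK]
    have hcard : #K = #K' + 2 := by
      rw [hK_eq, card_insert_of_notMem (by simp [hvK', hvw.ne]), card_insert_of_notMem hwK']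
    have hK' : ∀ v ∈ K', ∀ u ∈ K', ∀ w ∈ K', G.Adj v u → G.Adj v w → u = w :=
      fun a ha b hb c hc => hK a (hK'K ha) b (hK'K hb) c (hK'K hc)
    have hle : #(isolatedOn G K') ≤ #K' := card_filter_le _ _
    have hstep : indepPolynomialOn G K x = (1 + 2 * x) * indepPolynomialOn G K' x := by
      rw [hK_eq]
      exact indepPolynomialOn_insert_insert_of_adj hvK' hwK' hvw hvK hwK x
    rw [hstep, ih K' (ssubset_of_subset_of_ne hK'K fun h => hvK' (h ▸ hv)) hK', hiso, hcard,
      Nat.sub_add_comm hle, Nat.add_div_right _ two_pos, pow_succ]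
    ring
  · push Not at hedge
    have hiso : isolatedOn G K = K := filter_true_of_mem hedge
    rw [indepPolynomialOn_of_isIndepFinset hedge, hiso, Nat.sub_self, Nat.zero_div, pow_zero,
      mul_one]

lemma indepPolynomial_susp_s16 [Fintype V] [DecidableEq V] (C : Finset V) (x : ℤ) :
    indepPolynomial (susp G ↑C) x = indepPolynomial G x + x * indepPolynomialOn G Cᶜ x := by
  have hcomap : (susp G ↑C).comap Function.Embedding.some = G := by
    ext a b
    rfl
  have huniv : (univ : Finset (Option V)) = insert none (univ.map Function.Embedding.some) := by
    ext o
    cases o <;> simp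
  have hnbrs : (univ.map Function.Embedding.some).filter (¬ (susp G ↑C).Adj none ·) =
      Cᶜ.map Function.Embedding.some := by
    ext o
    cases o <;> simp [susp]
  rw [indepPolynomial_eq_indepPolynomialOn_univ, huniv, indepPolynomialOn_insert (by simp), hnbrs,
    indepPolynomialOn_map, indepPolynomialOn_map, hcomap, indepPolynomial_eq_indepPolynomialOn_univ]

end IndependencePolynomial

lemma mem_map_addRight_iff {α : Type*} [AddGroup α] {C : Finset α} {a v : α} :
    v ∈ C.map (Equiv.addRight a).toEmbedding ↔ v - a ∈ C := by
  simp [mem_map_equiv, ← sub_eq_add_neg]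

lemma mem_map_addRight_symm_iff {α : Type*} [AddGroup α] {C : Finset α} {a v : α} :
    v ∈ C.map (Equiv.addRight a).symm.toEmbedding ↔ v + a ∈ C := by
  simp [mem_map_equiv]

section CycleGraph

open SimpleGraph

variable {m : ℕ}

lemma cycleGraph_adj_iff {v w : Fin (m + 2)} :
    (cycleGraph (m + 2)).Adj v w ↔ w = v - 1 ∨ w = v + 1 := by
  rw [← mem_neighborSet, cycleGraph_neighborSet]
  simp

variable {C : Finset (Fin (m + 2))}

lemma compl_eq_map_addRight_one_union (hind : IsIndepFinset (cycleGraph (m + 2)) C)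
    (hmax : ∀ v ∉ C, ∃ u ∈ C, (cycleGraph (m + 2)).Adj v u) :
    Cᶜ = C.map (Equiv.addRight 1).toEmbedding ∪ C.map (Equiv.addRight 1).symm.toEmbedding := by
  ext v
  simp only [mem_compl, mem_union, mem_map_addRight_iff, mem_map_addRight_symm_iff]
  refine ⟨fun hv => by simpa [cycleGraph_adj_iff, and_or_left, exists_or] using hmax v hv, ?_⟩
  rintro (h | h) hv
  · exact hind v hv (v - 1) h (cycleGraph_adj_iff.mpr (Or.inl rfl))
  · exact hind v hv (v + 1) h (cycleGraph_adj_iff.mpr (Or.inr rfl))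

lemma isolatedOn_compl_eq_map_addRight_one_inter (hind : IsIndepFinset (cycleGraph (m + 2)) C) :
    isolatedOn (cycleGraph (m + 2)) Cᶜ =
      C.map (Equiv.addRight 1).toEmbedding ∩ C.map (Equiv.addRight 1).symm.toEmbedding := by
  ext v
  simp only [isolatedOn, mem_filter, mem_compl, mem_inter, mem_map_addRight_iff,
    mem_map_addRight_symm_iff, cycleGraph_adj_iff, not_imp_not, forall_eq_or_imp, forall_eq]
  exact ⟨And.right, fun h => ⟨fun hv => hind v hv _ h.1 (cycleGraph_adj_iff.mpr (Or.inl rfl)), h⟩⟩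

lemma subsingleton_neighbors_compl_of_maximal
    (hmax : ∀ v ∉ C, ∃ u ∈ C, (cycleGraph (m + 2)).Adj v u) :
    ∀ v ∈ Cᶜ, ∀ u ∈ Cᶜ, ∀ w ∈ Cᶜ,
      (cycleGraph (m + 2)).Adj v u → (cycleGraph (m + 2)).Adj v w → u = w := by
  intro v hv u hu w hw hvu hvw
  rw [mem_compl] at hv hu hw
  obtain ⟨z, hz, hvz⟩ := hmax v hv
  rw [cycleGraph_adj_iff] at hvu hvw hvz
  grind

lemma indepPolynomialOn_compl_of_maximal (hind : IsIndepFinset (cycleGraph (m + 2)) C)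
    (hmax : ∀ v ∉ C, ∃ u ∈ C, (cycleGraph (m + 2)).Adj v u) (x : ℤ) :
    indepPolynomialOn (cycleGraph (m + 2)) Cᶜ x =
      (1 + x) ^ (#C - (m + 2 - 2 * #C)) * (1 + 2 * x) ^ (m + 2 - 2 * #C) := by
  have hunion := compl_eq_map_addRight_one_union hind hmax
  have hcount : #Cᶜ + #(isolatedOn (cycleGraph (m + 2)) Cᶜ) = #C + #C := by
    rw [isolatedOn_compl_eq_map_addRight_one_inter hind, hunion, card_union_add_card_inter,
      card_map, card_map]
  have hle : #C ≤ #Cᶜ := by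
    rw [hunion, ← card_map (Equiv.addRight 1).toEmbedding]
    exact card_le_card subset_union_left
  have hcompl : #Cᶜ = m + 2 - #C := by rw [card_compl, Fintype.card_fin]
  rw [indepPolynomialOn_of_subsingleton_neighbors _ (subsingleton_neighbors_compl_of_maximal hmax)]
  congr 2 <;> omega

end CycleGraph

/-- For `n ≥ 4`, a maximal independent set `𝒞` of `C_n` with `c = |𝒞|`,
`ℓ = n - 2c`, and `G` the `𝒞`-suspension of `C_n`:
`P_G(x) = P_{C_n}(x) + x(1+x)^{c-ℓ}(1+2x)^ℓ`. -/
theorem stmt16 (n : ℕ) (hn : 4 ≤ n) (C : Finset (Fin n))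
    (hind : ∀ a ∈ C, ∀ b ∈ C, ¬ (SimpleGraph.cycleGraph n).Adj a b)
    (hmax : ∀ v ∉ C, ∃ u ∈ C, (SimpleGraph.cycleGraph n).Adj v u) :
    ∀ x : ℤ, indepPolynomial (susp (SimpleGraph.cycleGraph n) (↑C : Set (Fin n))) x =
      indepPolynomial (SimpleGraph.cycleGraph n) x +
        x * (1 + x) ^ (C.card - (n - 2 * C.card)) * (1 + 2 * x) ^ (n - 2 * C.card) := by
  intro x
  obtain ⟨m, rfl⟩ : ∃ m, n = m + 2 := ⟨n - 2, by omega⟩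
  rw [indepPolynomial_susp_s16, indepPolynomialOn_compl_of_maximal hind hmax, mul_assoc]
end
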